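/- Let N ≥ 3 be an integer and L > 0. The following are equivalent: (i) there exist λ ∈ ℂ and functions φ₁, …, φ_N : ℝ → ℂ, not all identically zero on [0,L], each satisfying the KdV spectral ODE with parameter λ on [0,L], with the boundary conditions φ_j(0) = φ₁(0) for all j, Σ_{j=1}^N φ_j''(0) = 0, φ_j(L) = 0 and φ_j'(0) = 0 for all j, φ₁'(L) = 0, and φ_j''(L) = 0 for j = 2,…,N; (ii) L belongs to the critical set 𝒩*. -/

import Mathlib

/-- A function `φ : ℝ → ℂ` satisfies the KdV spectral ODE with parameter `lam` on `[0, L]`: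
it is three times continuously differentiable and `lam·φ + φ' + φ''' = 0` on `[0, L]`. -/
def KdVSpectralODE (lam : ℂ) (L : ℝ) (φ : ℝ → ℂ) : Prop :=
  ContDiff ℝ 3 φ ∧
    ∀ x ∈ Set.Icc (0 : ℝ) L, lam * φ x + deriv φ x + iteratedDeriv 3 φ x = 0

/-- The critical set 𝒩* of Glass and Guerrero. -/
def criticalNStar : Set ℝ :=
  {L : ℝ | 0 < L ∧ ∃ a b : ℂ,
    a * Complex.exp a = b * Complex.exp b ∧
    b * Complex.exp b = -(a + b) * Complex.exp (-(a + b)) ∧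
    (L : ℂ) ^ 2 = -(a ^ 2 + a * b + b ^ 2)}

/-!
Two facts about solutions of `λφ + φ' + φ''' = 0` on `[0, L]` carry the proof. A solution is
determined by its jet `(φ, φ', φ'')` at any point of `[0, L]`, and for two solutions `f, g` the
Lagrange form `f''(x) g(L-x) + f'(x) g'(L-x) + f(x) (g'' + g)(L-x)` is constant in `x`.

Comparing two edges of the star through the Lagrange form shows that the common value at the node
vanishes; the Kirchhoff condition then leaves an edge `v` with `v(0) = v'(0) = v(L) = v''(L) = 0`
and `v''(0) ≠ 0`. Pairing `v` with a solution `h` in the Lagrange form gives `v''(0) h(L) = 0`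
whenever `h'(0) = 0`. For two roots `μ, ν` of `ν³ + ν + λ` the solution `h = ν e^{μx} - μ e^{νx}`
has `h'(0) = 0`, so `ν e^{μL} = μ e^{νL}`: this is the relation defining `𝒩*`, with `a = -μL` and
`b = -νL`. Conversely, for `L ∈ 𝒩*` and `c = -(a+b)`, the function
`(c-b) e^{-ax/L} + (a-c) e^{-bx/L} + (b-a) e^{-cx/L}` is such an edge `v`, and `v` on one edge,
`-v` on another and `0` elsewhere is an eigenfunction of the star.
-/

open Set Complex

theorem ContDiff.hasDerivAt_iteratedDeriv {E : Type*} [NormedAddCommGroup E] [NormedSpace ℝ E]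
    {f : ℝ → E} {n m : ℕ} (hf : ContDiff ℝ n f) (hm : m < n) (x : ℝ) :
    HasDerivAt (iteratedDeriv m f) (iteratedDeriv (m + 1) f x) x := by
  rw [iteratedDeriv_succ]
  exact (hf.differentiable_iteratedDeriv m (by exact_mod_cast hm) x).hasDerivAt

theorem Set.EqOn.iteratedDeriv_Icc {E : Type*} [NormedAddCommGroup E] [NormedSpace ℝ E]
    {f g : ℝ → E} {a b : ℝ} {n : ℕ} (hab : a < b) (hf : ContDiff ℝ n f) (hg : ContDiff ℝ n g)
    (h : EqOn f g (Icc a b)) : EqOn (iteratedDeriv n f) (iteratedDeriv n g) (Icc a b) := by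
  intro x hx
  rw [← iteratedDerivWithin_eq_iteratedDeriv (uniqueDiffOn_Icc hab) hf.contDiffAt hx,
    ← iteratedDerivWithin_eq_iteratedDeriv (uniqueDiffOn_Icc hab) hg.contDiffAt hx,
    iteratedDerivWithin_congr h hx]

theorem eqOn_Icc_of_hasDerivAt_of_lipschitzWith {E : Type*} [NormedAddCommGroup E]
    [NormedSpace ℝ E] {F : E → E} {K : NNReal} (hF : LipschitzWith K F) {f g : ℝ → E}
    {a b t₀ : ℝ} (hf : ∀ t ∈ Icc a b, HasDerivAt f (F (f t)) t)
    (hg : ∀ t ∈ Icc a b, HasDerivAt g (F (g t)) t) (ht₀ : t₀ ∈ Icc a b) (h : f t₀ = g t₀) :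
    EqOn f g (Icc a b) := by
  have hcont : ∀ {u : ℝ → E}, (∀ t ∈ Icc a b, HasDerivAt u (F (u t)) t) →
      ContinuousOn u (Icc a b) := fun hu => HasDerivAt.continuousOn hu
  rw [← Icc_union_Icc_eq_Icc ht₀.1 ht₀.2]
  refine EqOn.union ?_ ?_
  · have hsub : Icc a t₀ ⊆ Icc a b := Icc_subset_Icc_right ht₀.2
    exact ODE_solution_unique_of_mem_Icc_left (s := fun _ => univ)
      (fun _ _ => hF.lipschitzOnWith) ((hcont hf).mono hsub)
      (fun t ht => (hf t (hsub (Ioc_subset_Icc_self ht))).hasDerivWithinAt)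
      (fun _ _ => mem_univ _) ((hcont hg).mono hsub)
      (fun t ht => (hg t (hsub (Ioc_subset_Icc_self ht))).hasDerivWithinAt)
      (fun _ _ => mem_univ _) h
  · have hsub : Icc t₀ b ⊆ Icc a b := Icc_subset_Icc_left ht₀.1
    exact ODE_solution_unique (fun _ => hF) ((hcont hf).mono hsub)
      (fun t ht => (hf t (hsub (Ico_subset_Icc_self ht))).hasDerivWithinAt)
      ((hcont hg).mono hsub)
      (fun t ht => (hg t (hsub (Ico_subset_Icc_self ht))).hasDerivWithinAt) h

theorem Complex.re_eq_zero_of_sq_eq_neg {z : ℂ} {r : ℝ} (hr : 0 ≤ r) (h : z ^ 2 = -r) :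
    z.re = 0 := by
  have hre := congrArg re h
  have him := congrArg im h
  simp only [sq, mul_re, mul_im, neg_re, neg_im, ofReal_re, ofReal_im, neg_zero] at hre him
  rcases mul_eq_zero.1 (show z.re * z.im = 0 by linarith) with h | h
  · exact h
  · rw [h] at hre
    nlinarith [mul_self_nonneg z.re]

/-- The companion matrix of `λ + ∂ + ∂³`, acting on jets `(φ, φ', φ'')`. -/
noncomputable def kdvCompanion (lam : ℂ) : ℂ × ℂ × ℂ →L[ℂ] ℂ × ℂ × ℂ :=
  let x₀ := ContinuousLinearMap.fst ℂ ℂ (ℂ × ℂ)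
  let x₁ := (ContinuousLinearMap.fst ℂ ℂ ℂ).comp (ContinuousLinearMap.snd ℂ ℂ (ℂ × ℂ))
  let x₂ := (ContinuousLinearMap.snd ℂ ℂ ℂ).comp (ContinuousLinearMap.snd ℂ ℂ (ℂ × ℂ))
  x₁.prod (x₂.prod (-lam • x₀ - x₁))

@[simp]
theorem kdvCompanion_apply (lam : ℂ) (p : ℂ × ℂ × ℂ) :
    kdvCompanion lam p = (p.2.1, p.2.2, -(lam * p.1) - p.2.1) := by
  simp [kdvCompanion]

namespace KdVSpectralODE

variable {lam : ℂ} {L : ℝ} {φ f g : ℝ → ℂ}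

theorem iteratedDeriv_three_eq (hφ : KdVSpectralODE lam L φ) {x : ℝ} (hx : x ∈ Icc 0 L) :
    iteratedDeriv 3 φ x = -(lam * φ x) - deriv φ x := by
  linear_combination hφ.2 x hx

theorem hasDerivAt_jet (hφ : KdVSpectralODE lam L φ) {x : ℝ} (hx : x ∈ Icc 0 L) :
    HasDerivAt (fun y => (φ y, deriv φ y, iteratedDeriv 2 φ y))
      (kdvCompanion lam (φ x, deriv φ x, iteratedDeriv 2 φ x)) x := by
  have h₀ := hφ.1.hasDerivAt_iteratedDeriv (m := 0) (by norm_num) x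
  have h₁ := hφ.1.hasDerivAt_iteratedDeriv (m := 1) (by norm_num) x
  have h₂ := hφ.1.hasDerivAt_iteratedDeriv (m := 2) (by norm_num) x
  simp only [iteratedDeriv_zero, iteratedDeriv_one, zero_add] at h₀ h₁
  rw [kdvCompanion_apply, ← hφ.iteratedDeriv_three_eq hx]
  exact h₀.prodMk (h₁.prodMk h₂)

theorem eqOn_zero_of_jet_eq_zero (hφ : KdVSpectralODE lam L φ) {x₀ : ℝ} (hx₀ : x₀ ∈ Icc 0 L)
    (h₀ : φ x₀ = 0) (h₁ : deriv φ x₀ = 0) (h₂ : iteratedDeriv 2 φ x₀ = 0) :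
    EqOn φ 0 (Icc 0 L) := by
  have hjet := eqOn_Icc_of_hasDerivAt_of_lipschitzWith (kdvCompanion lam).lipschitz
    (fun t ht => hφ.hasDerivAt_jet ht) (g := fun _ => 0)
    (fun t _ => by rw [map_zero]; exact hasDerivAt_const t 0) hx₀
    (by simp [h₀, h₁, h₂])
  exact fun x hx => congrArg Prod.fst (hjet hx)

/-- The substitution `x ↦ L - x` turns `λ + ∂ + ∂³` into its formal adjoint, which makes the
Lagrange form `f'' g(L - ·) + f' g'(L - ·) + f (g'' + g)(L - ·)` constant on `[0, L]`. -/
theorem lagrange_identity (hL : 0 ≤ L) (hf : KdVSpectralODE lam L f)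
    (hg : KdVSpectralODE lam L g) :
    iteratedDeriv 2 f 0 * g L + deriv f 0 * deriv g L + f 0 * (iteratedDeriv 2 g L + g L) =
      iteratedDeriv 2 f L * g 0 + deriv f L * deriv g 0 + f L * (iteratedDeriv 2 g 0 + g 0) := by
  set B : ℝ → ℂ := fun x => iteratedDeriv 2 f x * g (L - x) + deriv f x * deriv g (L - x) +
    f x * (iteratedDeriv 2 g (L - x) + g (L - x))
  have hB : ∀ x ∈ Icc 0 L, HasDerivAt B 0 x := by
    intro x hx
    have hx' : L - x ∈ Icc 0 L := ⟨by linarith [hx.2], by linarith [hx.1]⟩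
    have hf₀ := hf.1.hasDerivAt_iteratedDeriv (m := 0) (by norm_num) x
    have hf₁ := hf.1.hasDerivAt_iteratedDeriv (m := 1) (by norm_num) x
    have hf₂ := hf.1.hasDerivAt_iteratedDeriv (m := 2) (by norm_num) x
    have hg₀ := (hg.1.hasDerivAt_iteratedDeriv (m := 0) (by norm_num) (L - x)).comp_const_sub L x
    have hg₁ := (hg.1.hasDerivAt_iteratedDeriv (m := 1) (by norm_num) (L - x)).comp_const_sub L x
    have hg₂ := (hg.1.hasDerivAt_iteratedDeriv (m := 2) (by norm_num) (L - x)).comp_const_sub L x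
    simp only [iteratedDeriv_zero, iteratedDeriv_one, Nat.reduceAdd] at hf₀ hf₁ hf₂ hg₀ hg₁ hg₂
    refine ((hf₂.mul hg₀).add (hf₁.mul hg₁) |>.add (hf₀.mul (hg₂.add hg₀))).congr_deriv ?_
    rw [hf.iteratedDeriv_three_eq hx, hg.iteratedDeriv_three_eq hx', Pi.add_apply]
    ring
  have hconst := constant_of_has_deriv_right_zero
    (fun x hx => (hB x hx).continuousAt.continuousWithinAt)
    (fun x hx => (hB x (Ico_subset_Icc_self hx)).hasDerivWithinAt) L ⟨hL, le_rfl⟩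
  simpa [B] using hconst.symm

theorem const_mul (c : ℂ) (hφ : KdVSpectralODE lam L φ) :
    KdVSpectralODE lam L (fun x => c * φ x) := by
  refine ⟨contDiff_const.mul hφ.1, fun x hx => ?_⟩
  simp only [iteratedDeriv_const_mul_field, deriv_const_mul_field']
  linear_combination c * hφ.2 x hx

end KdVSpectralODE

section ExpSum

variable {ι : Type*} [Fintype ι] (A ν : ι → ℂ)

noncomputable def expSum (x : ℝ) : ℂ := ∑ i, A i * cexp (ν i * x)

theorem hasDerivAt_expSum (x : ℝ) : HasDerivAt (expSum A ν) (expSum (A * ν) ν x) x := by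
  unfold expSum
  refine HasDerivAt.fun_sum fun i _ => ?_
  have h := (((hasDerivAt_id (x : ℂ)).const_mul (ν i)).cexp).comp_ofReal (z := x)
  simpa [mul_assoc, mul_comm, mul_left_comm] using h.const_mul (A i)

theorem iteratedDeriv_expSum (n : ℕ) : iteratedDeriv n (expSum A ν) = expSum (A * ν ^ n) ν := by
  induction n generalizing A with
  | zero => simp
  | succ n ih =>
    rw [iteratedDeriv_succ, ih]
    ext x
    rw [(hasDerivAt_expSum _ ν x).deriv, pow_succ, mul_assoc]

theorem expSum_zero : expSum A ν 0 = ∑ i, A i := by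
  simp [expSum]

theorem contDiff_expSum {n : ℕ∞} : ContDiff ℝ n (expSum A ν) :=
  contDiff_of_differentiable_iteratedDeriv fun m _ => by
    rw [iteratedDeriv_expSum]
    exact fun x => (hasDerivAt_expSum _ ν x).differentiableAt

theorem kdvSpectralODE_expSum {lam : ℂ} (hν : ∀ i, ν i ^ 3 + ν i + lam = 0) (L : ℝ) :
    KdVSpectralODE lam L (expSum A ν) := by
  refine ⟨contDiff_expSum A ν, fun x _ => ?_⟩
  rw [iteratedDeriv_expSum, (hasDerivAt_expSum A ν x).deriv]
  simp only [expSum, Finset.mul_sum, ← Finset.sum_add_distrib]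
  refine Finset.sum_eq_zero fun i _ => ?_
  simp only [Pi.mul_apply, Pi.pow_apply]
  linear_combination A i * cexp (ν i * x) * hν i

end ExpSum

/-- The spectral problem on a star graph with `N` edges of length `L`, each parametrised from the
central node `x = 0`; the edge `i₀` is the one with the condition `φ'(L) = 0` at its far end. -/
def IsStarEigenfunction {N : ℕ} (lam : ℂ) (L : ℝ) (i₀ : Fin N) (φ : Fin N → ℝ → ℂ) : Prop :=
  (∀ j, KdVSpectralODE lam L (φ j)) ∧
    (∀ j, φ j 0 = φ i₀ 0) ∧
    (∑ j, iteratedDeriv 2 (φ j) 0) = 0 ∧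
    (∀ j, φ j L = 0) ∧
    (∀ j, deriv (φ j) 0 = 0) ∧
    deriv (φ i₀) L = 0 ∧
    (∀ j : Fin N, j ≠ i₀ → iteratedDeriv 2 (φ j) L = 0) ∧
    (∃ j, ∃ x ∈ Icc (0 : ℝ) L, φ j x ≠ 0)

structure IsReducedEigenfunction (lam : ℂ) (L : ℝ) (v : ℝ → ℂ) : Prop where
  ode : KdVSpectralODE lam L v
  apply_zero : v 0 = 0
  deriv_zero : deriv v 0 = 0
  apply_L : v L = 0
  iteratedDeriv_two_L : iteratedDeriv 2 v L = 0
  iteratedDeriv_two_zero_ne : iteratedDeriv 2 v 0 ≠ 0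

section Eigenfunctions

variable {lam : ℂ} {L : ℝ}

theorem IsStarEigenfunction.exists_isReducedEigenfunction {N : ℕ} {i₀ j₁ : Fin N}
    {φ : Fin N → ℝ → ℂ} (hφ : IsStarEigenfunction lam L i₀ φ) (hL : 0 ≤ L) (hj₁ : j₁ ≠ i₀) :
    ∃ v, IsReducedEigenfunction lam L v := by
  obtain ⟨hode, hnode, hkirchhoff, hφL, hφ'0, hφ'L, hφ''L, j, x, hx, hφjx⟩ := hφ
  have h0 : (0 : ℝ) ∈ Icc 0 L := ⟨le_rfl, hL⟩
  have hnode_zero : φ i₀ 0 = 0 := by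
    have hlag := (hode j₁).lagrange_identity hL (hode i₀)
    rw [hnode j₁, hφ'0 j₁, hφL j₁, hφL i₀, hφ''L j₁ hj₁, hφ'0 i₀] at hlag
    by_contra hc
    have h₂ : iteratedDeriv 2 (φ i₀) L = 0 :=
      (mul_eq_zero.1 (by linear_combination hlag)).resolve_left hc
    exact hc ((hode i₀).eqOn_zero_of_jet_eq_zero ⟨hL, le_rfl⟩ (hφL i₀) hφ'L h₂ h0)
  obtain ⟨k, hk, hk₂⟩ : ∃ k, k ≠ i₀ ∧ iteratedDeriv 2 (φ k) 0 ≠ 0 := by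
    by_contra! h
    have hi₀ : iteratedDeriv 2 (φ i₀) 0 = 0 := by
      rwa [Finset.sum_eq_single i₀ (fun k _ hk => h k hk) (by simp)] at hkirchhoff
    have hj : iteratedDeriv 2 (φ j) 0 = 0 := if hj : j = i₀ then hj ▸ hi₀ else h j hj
    exact hφjx <| (hode j).eqOn_zero_of_jet_eq_zero h0 ((hnode j).trans hnode_zero) (hφ'0 j) hj hx
  exact ⟨φ k, hode k, (hnode k).trans hnode_zero, hφ'0 k, hφL k, hφ''L k hk, hk₂⟩

namespace IsReducedEigenfunction

variable {v : ℝ → ℂ}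

theorem apply_L_eq_zero (hv : IsReducedEigenfunction lam L v) (hL : 0 ≤ L) {h : ℝ → ℂ}
    (hh : KdVSpectralODE lam L h) (hh'0 : deriv h 0 = 0) : h L = 0 := by
  have hlag := hv.ode.lagrange_identity hL hh
  rw [hv.apply_zero, hv.deriv_zero, hv.apply_L, hv.iteratedDeriv_two_L, hh'0] at hlag
  exact (mul_eq_zero.1 (by linear_combination hlag)).resolve_left hv.iteratedDeriv_two_zero_ne

theorem exists_ne_zero (hv : IsReducedEigenfunction lam L v) (hL : 0 < L) :
    ∃ x ∈ Icc 0 L, v x ≠ 0 := by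
  by_contra! h
  refine hv.iteratedDeriv_two_zero_ne ?_
  simpa using EqOn.iteratedDeriv_Icc (n := 2) hL (hv.ode.1.of_le (by norm_num)) contDiff_const
    (g := fun _ => 0) h ⟨le_rfl, hL.le⟩

theorem isStarEigenfunction (hv : IsReducedEigenfunction lam L v) (hL : 0 < L) {N : ℕ}
    {i₀ j₁ j₂ : Fin N} (h₁ : j₁ ≠ i₀) (h₂ : j₂ ≠ i₀) (h₁₂ : j₁ ≠ j₂) :
    IsStarEigenfunction lam L i₀
      fun j x => (Pi.single j₁ 1 - Pi.single j₂ 1 : Fin N → ℂ) j * v x := by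
  obtain ⟨x, hx, hvx⟩ := hv.exists_ne_zero hL
  refine ⟨fun j => hv.ode.const_mul _, ?_, ?_, ?_, ?_, ?_, ?_, j₁, x, hx, ?_⟩
  · simp [hv.apply_zero]
  · simp only [iteratedDeriv_const_mul_field, ← Finset.sum_mul]
    simp
  · simp [hv.apply_L]
  · simp [deriv_const_mul_field', hv.deriv_zero]
  · simp [h₁.symm, h₂.symm]
  · simp [iteratedDeriv_const_mul_field, hv.iteratedDeriv_two_L]
  · simp [h₁₂.symm, hvx]

end IsReducedEigenfunction

end Eigenfunctions

open Polynomial in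
theorem exists_cubic_roots (lam : ℂ) :
    ∃ ν₁ ν₂ : ℂ, ν₁ ^ 3 + ν₁ + lam = 0 ∧ ν₁ ^ 2 + ν₁ * ν₂ + ν₂ ^ 2 = -1 := by
  have hdeg : (X ^ 3 + X + C lam : ℂ[X]).degree = 3 := by compute_degree!
  obtain ⟨ν₁, hν₁⟩ := IsAlgClosed.exists_root (X ^ 3 + X + C lam : ℂ[X]) (by simp [hdeg])
  obtain ⟨q, hq⟩ := IsAlgClosed.exists_eq_mul_self (-3 * ν₁ ^ 2 - 4)
  exact ⟨ν₁, (q - ν₁) / 2, by simpa using hν₁, by linear_combination (-1 / 4 : ℂ) * hq⟩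

theorem neg_mul_cexp_neg_eq {μ ν : ℂ} {L : ℝ} (h : ν * cexp (μ * L) = μ * cexp (ν * L)) :
    -(μ * L) * cexp (-(μ * L)) = -(ν * L) * cexp (-(ν * L)) := by
  rw [exp_neg, exp_neg, neg_mul, neg_mul, neg_inj, ← div_eq_mul_inv, ← div_eq_mul_inv,
    div_eq_div_iff (exp_ne_zero _) (exp_ne_zero _)]
  linear_combination -(L : ℂ) * h

theorem mem_criticalNStar_of_mul_cexp_eq {L : ℝ} (hL : 0 < L) {ν₁ ν₂ : ℂ}
    (hν : ν₁ ^ 2 + ν₁ * ν₂ + ν₂ ^ 2 = -1) (h₁₂ : ν₂ * cexp (ν₁ * L) = ν₁ * cexp (ν₂ * L))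
    (h₂₃ : -(ν₁ + ν₂) * cexp (ν₂ * L) = ν₂ * cexp (-(ν₁ + ν₂) * L)) :
    L ∈ criticalNStar := by
  refine ⟨hL, -(ν₁ * L), -(ν₂ * L), neg_mul_cexp_neg_eq h₁₂, ?_,
    by linear_combination (L : ℂ) ^ 2 * hν⟩
  rw [show -(-(ν₁ * L) + -(ν₂ * L)) = -(-(ν₁ + ν₂) * L) by ring]
  exact neg_mul_cexp_neg_eq h₂₃

theorem mul_cexp_eq_of_forall_apply_L_eq_zero {lam : ℂ} {L : ℝ}
    (H : ∀ h, KdVSpectralODE lam L h → deriv h 0 = 0 → h L = 0) {μ ν : ℂ}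
    (hμ : μ ^ 3 + μ + lam = 0) (hν : ν ^ 3 + ν + lam = 0) :
    ν * cexp (μ * L) = μ * cexp (ν * L) := by
  have hode := kdvSpectralODE_expSum ![ν, -μ] ![μ, ν] (Fin.forall_fin_two.2 ⟨hμ, hν⟩) L
  have h'0 : deriv (expSum ![ν, -μ] ![μ, ν]) 0 = 0 := by
    rw [(hasDerivAt_expSum _ _ 0).deriv, expSum_zero]
    simp [Fin.sum_univ_two]
    ring
  simpa [expSum, Fin.sum_univ_two, ← sub_eq_add_neg, sub_eq_zero] using H _ hode h'0

theorem mem_criticalNStar_of_forall_apply_L_eq_zero {lam : ℂ} {L : ℝ} (hL : 0 < L)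
    (H : ∀ h, KdVSpectralODE lam L h → deriv h 0 = 0 → h L = 0) : L ∈ criticalNStar := by
  obtain ⟨ν₁, ν₂, hν₁, hν⟩ := exists_cubic_roots lam
  have hν₂ : ν₂ ^ 3 + ν₂ + lam = 0 := by linear_combination hν₁ + (ν₂ - ν₁) * hν
  have hν₃ : (-(ν₁ + ν₂)) ^ 3 + -(ν₁ + ν₂) + lam = 0 := by
    linear_combination hν₁ + (-(ν₁ + ν₂) - ν₁) * hν
  exact mem_criticalNStar_of_mul_cexp_eq hL hν (mul_cexp_eq_of_forall_apply_L_eq_zero H hν₁ hν₂)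
    (mul_cexp_eq_of_forall_apply_L_eq_zero H hν₂ hν₃)

/-- Here `x` is purely imaginary, so `e^{3x} = -2` would contradict `‖e^{3x}‖ = 1`. -/
theorem mul_cexp_ne_neg_two_mul_mul_cexp {L : ℝ} (hL : L ≠ 0) {x : ℂ}
    (hL2 : (L : ℂ) ^ 2 = -3 * x ^ 2) : x * cexp x ≠ -2 * x * cexp (-2 * x) := by
  intro h
  have hx : x ≠ 0 := by
    rintro rfl
    exact hL (by simpa using hL2)
  have hexp : cexp x = -2 * cexp (-2 * x) := mul_left_cancel₀ hx (by linear_combination h)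
  have h3 : cexp (3 * x) = -2 :=
    calc cexp (3 * x) = cexp x * cexp (2 * x) := by rw [← exp_add]; ring_nf
      _ = -2 * cexp (-2 * x + 2 * x) := by rw [hexp, exp_add]; ring
      _ = -2 := by simp
  have hre : (3 * x).re = 0 :=
    re_eq_zero_of_sq_eq_neg (r := 3 * L ^ 2) (by positivity)
      (by push_cast; linear_combination 3 * hL2)
  have := congrArg norm h3
  rw [norm_exp, hre, Real.exp_zero] at this
  norm_num at this

theorem sum_three_mul_cexp_neg_eq_div {a b c : ℂ} (hab : a * cexp a = b * cexp b)
    (hbc : b * cexp b = c * cexp c) (ha : a ≠ 0) (A B C : ℂ) :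
    A * cexp (-a) + B * cexp (-b) + C * cexp (-c) = (A * a + B * b + C * c) / (a * cexp a) := by
  have hcancel : ∀ x : ℂ, x * cexp x * cexp (-x) = x := fun x => by
    rw [mul_assoc, ← exp_add, add_neg_cancel, exp_zero, mul_one]
  rw [eq_div_iff (mul_ne_zero ha (exp_ne_zero a))]
  linear_combination A * hcancel a + B * (cexp (-b) * hab + hcancel b)
    + C * (cexp (-c) * (hab.trans hbc) + hcancel c)

theorem isReducedEigenfunction_expSum {L : ℝ} (hL : L ≠ 0) {a b c : ℂ} (hsum : a + b + c = 0)
    (hL2 : (L : ℂ) ^ 2 = a * b + b * c + c * a) (hab : a * cexp a = b * cexp b)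
    (hbc : b * cexp b = c * cexp c) (hdist : (a - b) * (b - c) * (c - a) ≠ 0) :
    IsReducedEigenfunction (a * b * c / L ^ 3) L
      (expSum ![c - b, a - c, b - a] ![-a / L, -b / L, -c / L]) := by
  have hL' : (L : ℂ) ≠ 0 := ofReal_ne_zero.2 hL
  have ha : a ≠ 0 := by
    rintro rfl
    have hb : b = 0 := by simpa [exp_ne_zero] using hab.symm
    exact hdist (by simp [hb])
  have hroot : ∀ x, (x - a) * (x - b) * (x - c) = 0 →
      (-x / L) ^ 3 + -x / L + a * b * c / L ^ 3 = 0 := by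
    intro x hx
    field_simp
    linear_combination (-1 : ℂ) * hx - x * hL2 - x ^ 2 * hsum
  have hν : ∀ x : ℂ, -x / L * L = -x := fun x => div_mul_cancel₀ _ hL'
  refine ⟨kdvSpectralODE_expSum _ _ ?_ L, ?_, ?_, ?_, ?_, ?_⟩
  · intro i
    fin_cases i <;> exact hroot _ (by simp)
  · simp [expSum_zero, Fin.sum_univ_three]
  · rw [(hasDerivAt_expSum _ _ 0).deriv, expSum_zero]
    simp [Fin.sum_univ_three]
    ring
  · simp only [expSum, Fin.sum_univ_three]
    simp only [Matrix.cons_val, hν, sum_three_mul_cexp_neg_eq_div hab hbc ha]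
    ring
  · rw [iteratedDeriv_expSum]
    simp only [expSum, Fin.sum_univ_three, Pi.mul_apply, Pi.pow_apply]
    simp only [Matrix.cons_val, hν, sum_three_mul_cexp_neg_eq_div hab hbc ha]
    rw [div_eq_zero_iff]
    exact .inl (by linear_combination (a - b) * (b - c) * (c - a) / L ^ 2 * hsum)
  · rw [iteratedDeriv_expSum, expSum_zero]
    convert div_ne_zero hdist (pow_ne_zero 2 hL') using 1
    simp [Fin.sum_univ_three]
    field_simp
    ring

theorem exists_isReducedEigenfunction_of_mem_criticalNStar {L : ℝ} (h : L ∈ criticalNStar) :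
    ∃ lam v, IsReducedEigenfunction lam L v := by
  obtain ⟨hL, a, b, hab, hbc, hL2⟩ := h
  refine ⟨_, _, isReducedEigenfunction_expSum hL.ne' (c := -(a + b)) (by ring)
    (by linear_combination hL2) hab hbc ?_⟩
  refine mul_ne_zero (mul_ne_zero (sub_ne_zero.2 ?_) (sub_ne_zero.2 ?_)) (sub_ne_zero.2 ?_)
  · rintro rfl
    exact mul_cexp_ne_neg_two_mul_mul_cexp hL.ne' (x := a) (by linear_combination hL2)
      (by rwa [show -2 * a = -(a + a) by ring])
  · intro h
    obtain rfl : a = -2 * b := by linear_combination h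
    exact mul_cexp_ne_neg_two_mul_mul_cexp hL.ne' (x := b) (by linear_combination hL2) hab.symm
  · intro h
    obtain rfl : b = -2 * a := by linear_combination -h
    exact mul_cexp_ne_neg_two_mul_mul_cexp hL.ne' (x := a) (by linear_combination hL2) hab

theorem stmt5 (N : ℕ) (hN : 3 ≤ N) (L : ℝ) (hL : 0 < L) :
    (∃ lam : ℂ, ∃ φ : Fin N → ℝ → ℂ,
      (∀ j, KdVSpectralODE lam L (φ j)) ∧
      (∀ j, φ j 0 = φ ⟨0, by omega⟩ 0) ∧
      (∑ j, iteratedDeriv 2 (φ j) 0) = 0 ∧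
      (∀ j, φ j L = 0) ∧
      (∀ j, deriv (φ j) 0 = 0) ∧
      deriv (φ ⟨0, by omega⟩) L = 0 ∧
      (∀ j : Fin N, j ≠ ⟨0, by omega⟩ → iteratedDeriv 2 (φ j) L = 0) ∧
      (∃ j, ∃ x ∈ Set.Icc (0 : ℝ) L, φ j x ≠ 0)) ↔
    L ∈ criticalNStar := by
  have h₁ : (⟨1, by omega⟩ : Fin N) ≠ ⟨0, by omega⟩ := by simp
  have h₂ : (⟨2, by omega⟩ : Fin N) ≠ ⟨0, by omega⟩ := by simp
  have h₁₂ : (⟨1, by omega⟩ : Fin N) ≠ ⟨2, by omega⟩ := by simp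
  constructor
  · rintro ⟨lam, φ, hφ⟩
    obtain ⟨v, hv⟩ := IsStarEigenfunction.exists_isReducedEigenfunction hφ hL.le h₁
    exact mem_criticalNStar_of_forall_apply_L_eq_zero hL fun _ hh hh'0 =>
      hv.apply_L_eq_zero hL.le hh hh'0
  · intro hmem
    obtain ⟨lam, v, hv⟩ := exists_isReducedEigenfunction_of_mem_criticalNStar hmem
    exact ⟨lam, _, hv.isStarEigenfunction hL h₁ h₂ h₁₂⟩
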